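/- Let H be the contraction hierarchy of a separator decomposition T, let X be a node of T with boundary B(X), and let l be the lowest-ranked vertex of B(X). Then for every b ∈ B(X), the edge (l, b) is in H (for b ≠ l), and consequently the CCH search space satisfies S(b) ⊆ S(l), so S(l) = ⋃_{b ∈ B(X)} S(b). -/

import Mathlib

/-!
Every boundary vertex of `G_X` lies in the bag of a proper ancestor of `X`: otherwise the
lowest common ancestor of `X` and its bag would have two distinct children whose subtrees
are joined by an edge of `G`, against the separator property. By the postorder numbering
all of `G_X` is therefore ranked below `B(X)`, and since `G_X` is connected, any two
boundary vertices are joined by a path whose interior lies in `G_X`; this is the shortcut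
`(l, b)` of `H`.

For the search spaces, an upward edge `(v, w)` of `H` makes `w` an ancestor of `v` in the
elimination tree: the parent `p` of `v` satisfies `rank p ≤ rank w`, and if `p ≠ w` the
two upward edges at `v` close a triangle, giving the edge `(p, w)` with a smaller rank gap.
-/

/-- `anc parent Z X`: node `X` is a (weak) ancestor of node `Z`. -/
def anc {ι : Type*} (parent : ι → ι) : ι → ι → Prop :=
  Relation.ReflTransGen (fun a b => parent a = b)

/-- Vertex set of the subgraph `G_X` induced by the subtree rooted at `X`. -/
def subVerts {V ι : Type*} (parent : ι → ι) (bag : ι → Set V) (X : ι) : Set V :=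
  {v | ∃ Z, anc parent Z X ∧ v ∈ bag Z}

/-- The CCH search space `S(v)`: the set of ancestors of `v` (including `v`) in the
elimination tree given by the parent function `par` with root `root`. -/
def searchSpace {V : Type*} (par : V → V) (root : V) (v : V) : Set V :=
  {w | Relation.ReflTransGen (fun a b => a ≠ root ∧ b = par a) v w}

open SimpleGraph

section DecompositionTree

variable {ι : Type*} {parent : ι → ι}

lemma subVerts_mono {V : Type*} {bag : ι → Set V} {X Y : ι} (h : anc parent X Y) :
    subVerts parent bag X ⊆ subVerts parent bag Y :=
  fun _ ⟨Z, hZX, hv⟩ => ⟨Z, hZX.trans h, hv⟩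

lemma anc_or_anc_or_exists_siblings {X Y Z : ι} (hXY : anc parent X Y)
    (hZY : anc parent Z Y) :
    anc parent X Z ∨ anc parent Z X ∨
      ∃ A C, anc parent X A ∧ anc parent Z C ∧ parent A = parent C ∧ A ≠ C := by
  induction hXY with
  | refl => exact Or.inr (Or.inl hZY)
  | @tail Y' Y hXY' hY'Y ih =>
    by_cases hZY' : anc parent Z Y'
    · exact ih hZY'
    rcases hZY.cases_tail with rfl | ⟨C, hZC, hCY⟩
    · exact Or.inl (hXY'.tail hY'Y)
    · have hne : Y' ≠ C := by rintro rfl; exact hZY' hZC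
      exact Or.inr (Or.inr ⟨Y', C, hXY', hZC, hY'Y.trans hCY.symm, hne⟩)

variable {V : Type*} {bag : ι → Set V} {G : SimpleGraph V}

lemma anc_of_adj_of_notMem_subVerts {rootNode : ι} (hroot : ∀ Z, anc parent Z rootNode)
    (hsep : ∀ Z Y₁ Y₂, parent Y₁ = Z → parent Y₂ = Z → Y₁ ≠ Y₂ →
      ∀ a ∈ subVerts parent bag Y₁, ∀ b ∈ subVerts parent bag Y₂, ¬ G.Adj a b)
    {X Z : ι} {v w : V} (hv : v ∈ subVerts parent bag X) (hw : w ∉ subVerts parent bag X)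
    (hwZ : w ∈ bag Z) (hvw : G.Adj v w) : anc parent X Z := by
  rcases anc_or_anc_or_exists_siblings (hroot X) (hroot Z) with
    hXZ | hZX | ⟨A, C, hXA, hZC, hAC, hne⟩
  · exact hXZ
  · exact absurd ⟨Z, hZX, hwZ⟩ hw
  · exact absurd hvw
      (hsep _ A C rfl hAC.symm hne v (subVerts_mono hXA hv) w ⟨Z, hZC, hwZ⟩)

lemma rank_lt_of_adj_of_notMem_subVerts {rootNode : ι} {rank : V → ℕ}
    (hroot : ∀ Z, anc parent Z rootNode) (hcover : ∀ v : V, ∃ Z, v ∈ bag Z)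
    (hsep : ∀ Z Y₁ Y₂, parent Y₁ = Z → parent Y₂ = Z → Y₁ ≠ Y₂ →
      ∀ a ∈ subVerts parent bag Y₁, ∀ b ∈ subVerts parent bag Y₂, ¬ G.Adj a b)
    (hpost : ∀ X Z, anc parent X Z → X ≠ Z →
      ∀ v ∈ subVerts parent bag X, ∀ w ∈ bag Z, rank v < rank w)
    {X : ι} {v w : V} (hv : v ∈ subVerts parent bag X) (hw : w ∉ subVerts parent bag X)
    (hvw : G.Adj v w) : ∀ x ∈ subVerts parent bag X, rank x < rank w := by
  intro x hx
  obtain ⟨Z, hwZ⟩ := hcover w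
  have hXZ : X ≠ Z := by rintro rfl; exact hw ⟨X, .refl, hwZ⟩
  exact hpost X Z (anc_of_adj_of_notMem_subVerts hroot hsep hv hw hwZ hvw) hXZ x hx w hwZ

end DecompositionTree

section ContractionHierarchy

variable {V : Type*} {G H : SimpleGraph V} {rank : V → ℕ}

def IsContractionHierarchy (G H : SimpleGraph V) (rank : V → ℕ) : Prop :=
  ∀ a b : V, rank a < rank b →
    (H.Adj a b ↔ ∃ p : G.Walk a b, ∀ x ∈ p.support, x ≠ a → x ≠ b → rank x < rank a)

lemma IsContractionHierarchy.adj_of_adj_of_adj (hH : IsContractionHierarchy G H rank)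
    {a b c : V} (hab : H.Adj a b) (hac : H.Adj a c) (hlt_ab : rank a < rank b)
    (hlt_bc : rank b < rank c) : H.Adj b c := by
  obtain ⟨p, hp⟩ := (hH a b hlt_ab).mp hab
  obtain ⟨q, hq⟩ := (hH a c (hlt_ab.trans hlt_bc)).mp hac
  refine (hH b c hlt_bc).mpr ⟨p.reverse.append q, fun x hx hxb hxc => ?_⟩
  rcases eq_or_ne x a with rfl | hxa
  · exact hlt_ab
  rw [Walk.mem_support_append_iff, Walk.support_reverse, List.mem_reverse] at hx
  rcases hx with hx | hx
  · exact (hp x hx hxa hxb).trans hlt_ab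
  · exact (hq x hx hxa hxc).trans hlt_ab

lemma IsContractionHierarchy.adj_of_exists_adj_connected
    (hH : IsContractionHierarchy G H rank) {S : Set V} {u a b : V}
    (hconn : ∀ v ∈ S, ∃ p : G.Walk v u, ∀ x ∈ p.support, x ∈ S)
    (hS : ∀ x ∈ S, rank x < rank a) (hab : rank a < rank b)
    (ha : ∃ v ∈ S, G.Adj v a) (hb : ∃ v ∈ S, G.Adj v b) : H.Adj a b := by
  obtain ⟨va, hva, hva_a⟩ := ha
  obtain ⟨vb, hvb, hvb_b⟩ := hb
  obtain ⟨pa, hpa⟩ := hconn va hva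
  obtain ⟨pb, hpb⟩ := hconn vb hvb
  refine (hH a b hab).mpr
    ⟨(Walk.cons hva_a.symm pa).append (Walk.cons hvb_b.symm pb).reverse, ?_⟩
  intro x hx hxa hxb
  simp only [Walk.mem_support_append_iff, Walk.support_reverse, List.mem_reverse,
    Walk.support_cons, List.mem_cons] at hx
  rcases hx with (hx | hx) | hx | hx
  · exact absurd hx hxa
  · exact hS x (hpa x hx)
  · exact absurd hx hxb
  · exact hS x (hpb x hx)

lemma searchSpace_subset_of_mem {par : V → V} {root v w : V}
    (h : w ∈ searchSpace par root v) : searchSpace par root w ⊆ searchSpace par root v :=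
  fun _ hx => Relation.ReflTransGen.trans h hx

lemma IsContractionHierarchy.mem_searchSpace_of_adj (hH : IsContractionHierarchy G H rank)
    (hrank : Function.Injective rank) {root : V} (hroot : ∀ v, v ≠ root → rank v < rank root)
    {par : V → V}
    (hpar : ∀ v, v ≠ root → H.Adj v (par v) ∧ rank v < rank (par v) ∧
      ∀ w, H.Adj v w → rank v < rank w → rank (par v) ≤ rank w)
    {v w : V} (hvw : H.Adj v w) (hlt : rank v < rank w) : w ∈ searchSpace par root v := by
  have hv : v ≠ root := by
    rintro rfl
    have hw : w ≠ v := by rintro rfl; exact hlt.false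
    exact (hroot w hw).asymm hlt
  obtain ⟨hv_par, hlt_par, hpar_min⟩ := hpar v hv
  rcases eq_or_ne (par v) w with rfl | hne
  · exact .single ⟨hv, rfl⟩
  have hlt' : rank (par v) < rank w := (hpar_min w hvw hlt).lt_of_ne (hrank.ne hne)
  exact .head ⟨hv, rfl⟩ (hH.mem_searchSpace_of_adj hrank hroot hpar
    (hH.adj_of_adj_of_adj hv_par hvw hlt_par hlt') hlt')
termination_by rank w - rank v

end ContractionHierarchy

theorem stmt5_general {V ι : Type*} (G H : SimpleGraph V) (parent : ι → ι) (bag : ι → Set V)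
    (rootNode : ι) (rank : V → ℕ) (hrank : Function.Injective rank)
    (hroot : ∀ Z, anc parent Z rootNode)
    (hcover : ∀ v : V, ∃ Z, v ∈ bag Z)
    -- separator property: each node separates the subtrees of its distinct children
    (hsep : ∀ Z Y₁ Y₂, parent Y₁ = Z → parent Y₂ = Z → Y₁ ≠ Y₂ →
      ∀ a ∈ subVerts parent bag Y₁, ∀ b ∈ subVerts parent bag Y₂, ¬ G.Adj a b)
    -- postorder numbering property
    (hpost : ∀ X Z, anc parent X Z → X ≠ Z →
      ∀ v ∈ subVerts parent bag X, ∀ w ∈ bag Z, rank v < rank w)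
    -- characterization of the contraction hierarchy `H` built from `G` by rank
    (hH : ∀ a b : V, rank a < rank b →
      (H.Adj a b ↔ ∃ p : G.Walk a b, ∀ x ∈ p.support, x ≠ a → x ≠ b → rank x < rank a))
    -- elimination tree of `H`: `par v` is the lowest-ranked higher `H`-neighbor
    (rootV : V) (hrootV : ∀ v, v ≠ rootV → rank v < rank rootV)
    (par : V → V)
    (hpar : ∀ v, v ≠ rootV → H.Adj v (par v) ∧ rank v < rank (par v) ∧
      ∀ w, H.Adj v w → rank v < rank w → rank (par v) ≤ rank w)
    (X : ι) (u : V)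
    -- `G_X` is connected
    (hconn : ∀ v ∈ subVerts parent bag X,
      ∃ p : G.Walk v u, ∀ x ∈ p.support, x ∈ subVerts parent bag X)
    -- the boundary `B(X)` of `G_X`, and its lowest-ranked vertex `l`
    (B : Set V)
    (hB : B = {w | w ∉ subVerts parent bag X ∧ ∃ v ∈ subVerts parent bag X, G.Adj v w})
    (l : V) (hl : l ∈ B) (hlmin : ∀ b ∈ B, rank l ≤ rank b) :
    (∀ b ∈ B, b ≠ l → H.Adj l b ∧ rank l < rank b) ∧
    searchSpace par rootV l = ⋃ b ∈ B, searchSpace par rootV b := by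
  have hCH : IsContractionHierarchy G H rank := hH
  have hedge : ∀ b ∈ B, b ≠ l → H.Adj l b ∧ rank l < rank b := by
    intro b hb hbl
    have hlb : rank l < rank b := (hlmin b hb).lt_of_ne (hrank.ne hbl.symm)
    subst hB
    obtain ⟨hlX, vl, hvl, hvl_l⟩ := hl
    have hbelow := rank_lt_of_adj_of_notMem_subVerts hroot hcover hsep hpost hvl hlX hvl_l
    exact ⟨hCH.adj_of_exists_adj_connected hconn hbelow hlb ⟨vl, hvl, hvl_l⟩ hb.2, hlb⟩
  refine ⟨hedge, subset_antisymm (Set.subset_biUnion_of_mem hl)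
    (Set.iUnion₂_subset fun b hb => ?_)⟩
  rcases eq_or_ne b l with rfl | hbl
  · exact le_rfl
  obtain ⟨hlb_adj, hlb⟩ := hedge b hb hbl
  exact searchSpace_subset_of_mem (hCH.mem_searchSpace_of_adj hrank hrootV hpar hlb_adj hlb)

/-- Let `H` be the contraction hierarchy of a separator
decomposition, `X` a node with boundary `B(X)`, and `l` the lowest-ranked vertex of
`B(X)`.  Then for every `b ∈ B(X)` with `b ≠ l` the edge `(l, b)` is in `H`, and
consequently `S(b) ⊆ S(l)`, so `S(l) = ⋃_{b ∈ B(X)} S(b)`. -/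
theorem stmt5 {V ι : Type*} (G H : SimpleGraph V) (parent : ι → ι) (bag : ι → Set V)
    (rootNode : ι) (rank : V → ℕ) (hrank : Function.Injective rank)
    (hroot : ∀ Z, anc parent Z rootNode)
    (hantisymm : ∀ Y Z, anc parent Y Z → anc parent Z Y → Y = Z)
    (hdisj : ∀ Y Z, Y ≠ Z → Disjoint (bag Y) (bag Z))
    (hcover : ∀ v : V, ∃ Z, v ∈ bag Z)
    -- separator property: each node separates the subtrees of its distinct children
    (hsep : ∀ Z Y₁ Y₂, parent Y₁ = Z → parent Y₂ = Z → Y₁ ≠ Y₂ →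
      ∀ a ∈ subVerts parent bag Y₁, ∀ b ∈ subVerts parent bag Y₂, ¬ G.Adj a b)
    -- postorder numbering property
    (hpost : ∀ X Z, anc parent X Z → X ≠ Z →
      ∀ v ∈ subVerts parent bag X, ∀ w ∈ bag Z, rank v < rank w)
    -- characterization of the contraction hierarchy `H` built from `G` by rank
    (hH : ∀ a b : V, rank a < rank b →
      (H.Adj a b ↔ ∃ p : G.Walk a b, ∀ x ∈ p.support, x ≠ a → x ≠ b → rank x < rank a))
    -- elimination tree of `H`: `par v` is the lowest-ranked higher `H`-neighbor
    (rootV : V) (hrootV : ∀ v, v ≠ rootV → rank v < rank rootV)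
    (par : V → V)
    (hpar : ∀ v, v ≠ rootV → H.Adj v (par v) ∧ rank v < rank (par v) ∧
      ∀ w, H.Adj v w → rank v < rank w → rank (par v) ≤ rank w)
    (X : ι) (u : V)
    (hu : u ∈ subVerts parent bag X)
    (humax : ∀ v ∈ subVerts parent bag X, v ≠ u → rank v < rank u)
    -- `G_X` is connected
    (hconn : ∀ v ∈ subVerts parent bag X,
      ∃ p : G.Walk v u, ∀ x ∈ p.support, x ∈ subVerts parent bag X)
    -- the boundary `B(X)` of `G_X`, and its lowest-ranked vertex `l`
    (B : Set V)
    (hB : B = {w | w ∉ subVerts parent bag X ∧ ∃ v ∈ subVerts parent bag X, G.Adj v w})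
    (l : V) (hl : l ∈ B) (hlmin : ∀ b ∈ B, rank l ≤ rank b) :
    (∀ b ∈ B, b ≠ l → H.Adj l b ∧ rank l < rank b) ∧
    searchSpace par rootV l = ⋃ b ∈ B, searchSpace par rootV b :=
  stmt5_general G H parent bag rootNode rank hrank hroot hcover hsep hpost hH rootV hrootV par hpar
    X u hconn B hB l hl hlmin
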